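/- In the planar Boolean model with discs of i.i.d. random radii R distributed as μ intersecting the ball B(0,r), the mean m_r of the normalized arc-length ℓ of the shadow cast on the circle of radius r satisfies m_r ~ 2E[R]/(π r) as r → ∞. Concretely: if ℓ is the image of (R, U) ~ μ ⊗ Uniform(0,1) under ℓ = (1/π)·arcsin(1/√(1 + (r/R)(2 + r/R)U)) for 0 ≤ U ≤ r/(r+2R), and ℓ = (1/π)·arccos((r/R + (2 + r/R)U)/(2√(1 + (r/R)(2 + r/R)U))) for r/(r+2R) ≤ U ≤ 1, then lim_{r→∞} r·E[ℓ] = 2E[R]/π. -/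

import Mathlib

open MeasureTheory

/-- The normalized length of the arc shadowed on the circle of radius `r` by a disc of radius
`R` whose position is parametrized by `u ∈ (0,1)` (equations (6) of the paper). -/
noncomputable def shadowLen (R u r : ℝ) : ℝ :=
  if u ≤ r / (r + 2*R) then
    (1/Real.pi) * Real.arcsin (1 / Real.sqrt (1 + (r/R)*(2 + r/R)*u))
  else
    (1/Real.pi) * Real.arccos ((r/R + (2 + r/R)*u) / (2 * Real.sqrt (1 + (r/R)*(2 + r/R)*u)))

/-!
With `b = (r/R)(2 + r/R)`, on `u ≤ r/(r+2R)` the shadow is `arcsin (1/√(1+bu)) / π`. Since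
`y ≤ arcsin y ≤ y/√(1-y²)`, it lies between the derivatives of `(2/(πb))·√(1+bu)` and
`(2/(πb))·√(bu)`, whose increments over `[0, r/(r+2R)]` are `2R(r-R)/(πr(r+2R))` at least and
`2R/(π(r+2R))` at most. On the remaining interval, of length `2R/(r+2R)`, the shadow angle
`arccos c` has `1 - c² ≤ (R/r)²` (AM-GM), so the shadow is at most `arcsin (R/r) / π ≤ R/(2r)`.
Hence `|r·E[ℓ | R] - 2R/π| ≤ 2R²/r` whenever `R ≤ r`, and integrating in `R ≤ C` gives the limit.
-/

open Real Set Filter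

namespace Real

lemma self_le_arcsin {y : ℝ} (h₀ : 0 ≤ y) (h₁ : y ≤ 1) : y ≤ arcsin y := by
  simpa [sin_arcsin (by linarith) h₁] using sin_le (arcsin_nonneg.2 h₀)

lemma arcsin_le_div_sqrt_one_sub_sq {y : ℝ} (h₀ : 0 ≤ y) (h₁ : y < 1) :
    arcsin y ≤ y / √(1 - y ^ 2) := by
  rw [← tan_arcsin]
  exact le_tan (arcsin_nonneg.2 h₀) (arcsin_lt_pi_div_two.2 h₁)

lemma arcsin_le_pi_div_two_mul {y : ℝ} (h₀ : 0 ≤ y) (h₁ : y ≤ 1) : arcsin y ≤ π / 2 * y := by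
  have := mul_le_sin (arcsin_nonneg.2 h₀) (arcsin_le_pi_div_two y)
  rw [sin_arcsin (by linarith) h₁] at this
  rw [div_mul_eq_mul_div, div_le_iff₀ pi_pos] at this
  nlinarith [pi_pos]

lemma arccos_le_pi_div_two_mul {c y : ℝ} (hc : 0 ≤ c) (hy₀ : 0 ≤ y) (hy₁ : y ≤ 1)
    (h : 1 - c ^ 2 ≤ y ^ 2) : arccos c ≤ π / 2 * y := by
  rw [arccos_eq_arcsin hc]
  refine (monotone_arcsin ?_).trans (arcsin_le_pi_div_two_mul hy₀ hy₁)
  simpa [sqrt_sq hy₀] using sqrt_le_sqrt h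

lemma hasDerivAt_two_div_mul_sqrt {a b u : ℝ} (hb : b ≠ 0) (h : 0 < a + b * u) :
    HasDerivAt (fun u => 2 / b * √(a + b * u)) (1 / √(a + b * u)) u := by
  have hlin : HasDerivAt (fun u => a + b * u) b u := by
    simpa using ((hasDerivAt_id u).const_mul b).const_add a
  exact ((hlin.sqrt h.ne').const_mul (2 / b)).congr_deriv (by field_simp)

lemma arcsin_one_div_sqrt_one_add_le {v : ℝ} (hv : 0 < v) : arcsin (1 / √(1 + v)) ≤ 1 / √v := by
  have hsq : (1 / √(1 + v)) ^ 2 = 1 / (1 + v) := by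
    rw [div_pow, sq_sqrt (by positivity), one_pow]
  have hlt : 1 / √(1 + v) < 1 := by
    rw [div_lt_one (by positivity), lt_sqrt zero_le_one]; linarith
  convert arcsin_le_div_sqrt_one_sub_sq (by positivity) hlt using 1
  rw [hsq, show 1 - 1 / (1 + v) = v / (1 + v) by field_simp; ring, sqrt_div hv.le]
  have : √(1 + v) ≠ 0 := by positivity
  field_simp

end Real

lemma measurable_shadowLen (r : ℝ) : Measurable fun p : ℝ × ℝ => shadowLen p.1 p.2 r := by
  unfold shadowLen
  exact Measurable.ite (measurableSet_le (by fun_prop) (by fun_prop)) (by fun_prop) (by fun_prop)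

lemma shadowLen_nonneg (x u r : ℝ) : 0 ≤ shadowLen x u r := by
  unfold shadowLen
  split_ifs
  · exact mul_nonneg (by positivity) (arcsin_nonneg.2 (by positivity))
  · exact mul_nonneg (by positivity) (arccos_nonneg _)

lemma shadowLen_le_one (x u r : ℝ) : shadowLen x u r ≤ 1 := by
  have hπ := pi_pos
  unfold shadowLen
  split_ifs
  · calc _ ≤ 1 / π * (π / 2) := by gcongr; exact arcsin_le_pi_div_two _
      _ ≤ 1 := by field_simp; linarith
  · calc _ ≤ 1 / π * π := by gcongr; exact arccos_le_pi _
      _ = 1 := by field_simp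

lemma norm_shadowLen_le_one (x u r : ℝ) : ‖shadowLen x u r‖ ≤ 1 := by
  rw [norm_of_nonneg (shadowLen_nonneg x u r)]
  exact shadowLen_le_one x u r

lemma intervalIntegrable_shadowLen (x r a b : ℝ) :
    IntervalIntegrable (fun u => shadowLen x u r) volume a b :=
  (intervalIntegrable_const (c := (1 : ℝ))).mono_fun'
    ((measurable_shadowLen r).comp (measurable_const.prodMk measurable_id)).aestronglyMeasurable
    (.of_forall fun u => norm_shadowLen_le_one x u r)

lemma le_integral_shadowLen_head {x r : ℝ} (hx : 0 < x) (hr : 0 < r) :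
    2 * x * (r - x) / (π * r * (r + 2 * x)) ≤ ∫ u in (0)..r / (r + 2 * x), shadowLen x u r := by
  set b := r / x * (2 + r / x) with hb
  have hb0 : 0 < b := by positivity
  have hθ : 0 ≤ r / (r + 2 * x) := by positivity
  let g : ℝ → ℝ := fun u => 1 / π * (2 / b * √(1 + b * u))
  have hg : ∀ u ∈ Ioo 0 (r / (r + 2 * x)),
      HasDerivWithinAt g (1 / π * (1 / √(1 + b * u))) (Ioi u) u := fun u hu =>
    ((hasDerivAt_two_div_mul_sqrt hb0.ne' (by nlinarith [hu.1])).const_mul _).hasDerivWithinAt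
  have hle : ∀ u ∈ Ioo 0 (r / (r + 2 * x)), 1 / π * (1 / √(1 + b * u)) ≤ shadowLen x u r := by
    intro u hu
    rw [shadowLen, if_pos hu.2.le]
    gcongr
    refine self_le_arcsin (by positivity) ?_
    rw [div_le_one (sqrt_pos.2 (by nlinarith [hu.1])), one_le_sqrt]
    nlinarith [hu.1]
  have key := intervalIntegral.sub_le_integral_of_hasDeriv_right_of_le hθ (by fun_prop) hg
    ((intervalIntegrable_iff_integrableOn_Icc_of_le hθ).1 (intervalIntegrable_shadowLen x r 0 _)) hle
  have hbθ : b * (r / (r + 2 * x)) = (r / x) ^ 2 := by rw [hb]; field_simp; ring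
  have hsqrt : r / x ≤ √(1 + (r / x) ^ 2) := le_sqrt_of_sq_le (by linarith)
  refine le_trans ?_ key
  simp only [g, hbθ, mul_zero, add_zero, sqrt_one]
  calc 2 * x * (r - x) / (π * r * (r + 2 * x)) = 1 / π * (2 / b * (r / x - 1)) := by
        rw [hb]; field_simp; ring
    _ ≤ 1 / π * (2 / b * √(1 + (r / x) ^ 2)) - 1 / π * (2 / b * 1) := by
        rw [← mul_sub, ← mul_sub]; gcongr

lemma integral_shadowLen_head_le {x r : ℝ} (hx : 0 < x) (hr : 0 < r) :
    ∫ u in (0)..r / (r + 2 * x), shadowLen x u r ≤ 2 * x / (π * (r + 2 * x)) := by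
  set b := r / x * (2 + r / x) with hb
  have hb0 : 0 < b := by positivity
  have hθ : 0 ≤ r / (r + 2 * x) := by positivity
  let g : ℝ → ℝ := fun u => 1 / π * (2 / b * √(0 + b * u))
  have hg : ∀ u ∈ Ioo 0 (r / (r + 2 * x)),
      HasDerivWithinAt g (1 / π * (1 / √(0 + b * u))) (Ioi u) u := fun u hu =>
    ((hasDerivAt_two_div_mul_sqrt hb0.ne' (by nlinarith [hu.1])).const_mul _).hasDerivWithinAt
  have hle : ∀ u ∈ Ioo 0 (r / (r + 2 * x)), shadowLen x u r ≤ 1 / π * (1 / √(0 + b * u)) := by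
    intro u hu
    rw [shadowLen, if_pos hu.2.le, zero_add]
    gcongr
    exact arcsin_one_div_sqrt_one_add_le (by nlinarith [hu.1])
  have key := intervalIntegral.integral_le_sub_of_hasDeriv_right_of_le hθ (by fun_prop) hg
    ((intervalIntegrable_iff_integrableOn_Icc_of_le hθ).1 (intervalIntegrable_shadowLen x r 0 _)) hle
  have hbθ : b * (r / (r + 2 * x)) = (r / x) ^ 2 := by rw [hb]; field_simp; ring
  refine key.trans (le_of_eq ?_)
  simp only [g, hbθ, zero_add, mul_zero, sqrt_zero, sqrt_sq (div_pos hr hx).le]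
  rw [hb]; field_simp; ring

lemma shadowLen_le_of_lt {x u r : ℝ} (hx : 0 < x) (hxr : x ≤ r) (hu : r / (r + 2 * x) < u) :
    shadowLen x u r ≤ x / (2 * r) := by
  have hr : 0 < r := hx.trans_le hxr
  set s := r / x with hs
  have hs1 : 1 ≤ s := (one_le_div hx).2 hxr
  have hu0 : 0 < u := lt_of_le_of_lt (by positivity) hu
  set w := (2 + s) * u with hw
  have hw0 : 0 < w := by positivity
  have hV : 0 < 1 + s * w := by positivity
  rw [shadowLen, if_neg hu.not_ge, ← hs, mul_assoc s, ← hw]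
  have hc : 1 - ((s + w) / (2 * √(1 + s * w))) ^ 2 ≤ (1 / s) ^ 2 := by
    rw [div_pow, mul_pow, sq_sqrt hV.le, div_pow, one_pow, sub_le_iff_le_add,
      div_add_div _ _ (by positivity) (by positivity), le_div_iff₀ (by positivity)]
    -- `4 (1 + s w) (1 - s² (1 - c²)) = (2 + s w - s²)²`
    nlinarith [sq_nonneg (2 + s * w - s ^ 2)]
  have h := arccos_le_pi_div_two_mul (by positivity) (by positivity)
    ((div_le_one (by positivity)).2 hs1) hc
  calc 1 / π * arccos ((s + w) / (2 * √(1 + s * w))) ≤ 1 / π * (π / 2 * (1 / s)) := by gcongr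
    _ = x / (2 * r) := by rw [hs]; field_simp

lemma integral_shadowLen_tail_le {x r : ℝ} (hx : 0 < x) (hxr : x ≤ r) :
    ∫ u in r / (r + 2 * x)..1, shadowLen x u r ≤ x ^ 2 / (r * (r + 2 * x)) := by
  have hr : 0 < r := hx.trans_le hxr
  have hθ : r / (r + 2 * x) ≤ 1 := (div_le_one (by positivity)).2 (by linarith)
  calc ∫ u in r / (r + 2 * x)..1, shadowLen x u r ≤ ∫ _ in r / (r + 2 * x)..1, x / (2 * r) :=
        intervalIntegral.integral_mono_on_of_le_Ioo hθ (intervalIntegrable_shadowLen x r _ _)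
          intervalIntegrable_const fun u hu => shadowLen_le_of_lt hx hxr hu.1
    _ = x ^ 2 / (r * (r + 2 * x)) := by
        rw [intervalIntegral.integral_const, smul_eq_mul]; field_simp; ring

lemma abs_mul_integral_shadowLen_sub_le {x r : ℝ} (hx : 0 < x) (hxr : x ≤ r) :
    |r * (∫ u in Ioo 0 1, shadowLen x u r) - 2 * x / π| ≤ 2 * x ^ 2 / r := by
  have hr : 0 < r := hx.trans_le hxr
  have hθ : r / (r + 2 * x) ≤ 1 := (div_le_one (by positivity)).2 (by linarith)
  have hsplit : ∫ u in Ioo 0 1, shadowLen x u r =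
      (∫ u in (0)..r / (r + 2 * x), shadowLen x u r) + ∫ u in r / (r + 2 * x)..1, shadowLen x u r := by
    rw [intervalIntegral.integral_add_adjacent_intervals (intervalIntegrable_shadowLen x r _ _)
      (intervalIntegrable_shadowLen x r _ _), intervalIntegral.integral_of_le zero_le_one,
      integral_Ioc_eq_integral_Ioo]
  have h₁ := le_integral_shadowLen_head hx hr
  have h₂ := integral_shadowLen_head_le hx hr
  have h₃ := integral_shadowLen_tail_le hx hxr
  have h₄ : 0 ≤ ∫ u in r / (r + 2 * x)..1, shadowLen x u r :=
    intervalIntegral.integral_nonneg hθ fun u _ => shadowLen_nonneg x u r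
  rw [hsplit, abs_sub_le_iff]
  have hhead_lower : 2 * x / π - 2 * x ^ 2 / r ≤ r * ∫ u in (0)..r / (r + 2 * x), shadowLen x u r :=
    calc 2 * x / π - 2 * x ^ 2 / r ≤ 2 * x / π - 6 * x ^ 2 / (π * (r + 2 * x)) := by
          refine sub_le_sub_left ?_ _
          rw [div_le_div_iff₀ (by positivity) hr]
          have h3r : 3 * r ≤ π * (r + 2 * x) := by nlinarith [pi_gt_three]
          nlinarith [mul_le_mul_of_nonneg_left h3r (sq_nonneg x)]
      _ = r * (2 * x * (r - x) / (π * r * (r + 2 * x))) := by field_simp; ring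
      _ ≤ _ := by gcongr
  have hhead_upper : r * (∫ u in (0)..r / (r + 2 * x), shadowLen x u r) ≤ 2 * x / π :=
    calc _ ≤ r * (2 * x / (π * (r + 2 * x))) := by gcongr
      _ ≤ 2 * x / π := by
          rw [mul_div_assoc', div_le_div_iff₀ (by positivity) (by positivity)]
          nlinarith [mul_pos (mul_pos hx hx) pi_pos]
  have htail_upper : r * (∫ u in r / (r + 2 * x)..1, shadowLen x u r) ≤ 2 * x ^ 2 / r :=
    calc _ ≤ r * (x ^ 2 / (r * (r + 2 * x))) := by gcongr
      _ ≤ 2 * x ^ 2 / r := by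
          rw [mul_div_assoc', div_le_div_iff₀ (by positivity) hr]
          nlinarith [mul_pos hx hr, sq_nonneg x, mul_pos (mul_pos hx hx) hr]
  constructor <;> nlinarith [mul_nonneg hr.le h₄]

lemma integrable_integral_shadowLen (μ : Measure ℝ) [IsFiniteMeasure μ] (r : ℝ) :
    Integrable (fun x => ∫ u in Ioo 0 1, shadowLen x u r) μ := by
  refine .of_bound (measurable_shadowLen r).stronglyMeasurable.integral_prod_right'.aestronglyMeasurable
    1 (.of_forall fun x => ?_)
  simpa using norm_setIntegral_le_of_norm_le_const (f := fun u => shadowLen x u r)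
    (measure_Ioo_lt_top (μ := volume) (a := 0) (b := 1)) fun u _ => norm_shadowLen_le_one x u r

lemma abs_mul_integral_integral_shadowLen_sub_le (μ : Measure ℝ) [IsProbabilityMeasure μ] {C r : ℝ}
    (hsupp : ∀ᵐ x ∂μ, 0 < x ∧ x ≤ C) (hCr : C ≤ r) :
    |r * (∫ x, (∫ u in Ioo 0 1, shadowLen x u r) ∂μ) - 2 * (∫ x, x ∂μ) / π| ≤ 2 * C ^ 2 / r := by
  have hid : Integrable (fun x : ℝ => x) μ := .of_bound aestronglyMeasurable_id C <| by
    filter_upwards [hsupp] with x hx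
    rw [norm_of_nonneg hx.1.le]; exact hx.2
  have hsub : ∫ x, (r * (∫ u in Ioo 0 1, shadowLen x u r) - 2 * x / π) ∂μ =
      r * (∫ x, (∫ u in Ioo 0 1, shadowLen x u r) ∂μ) - 2 * (∫ x, x ∂μ) / π := by
    rw [integral_sub ((integrable_integral_shadowLen μ r).const_mul r)
      ((hid.const_mul 2).div_const π), integral_const_mul, integral_div, integral_const_mul]
  rw [← hsub, ← Real.norm_eq_abs]
  refine (norm_integral_le_of_norm_le_const (C := 2 * C ^ 2 / r) ?_).trans_eq
    (by rw [probReal_univ, mul_one])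
  filter_upwards [hsupp] with x hx
  have hr : 0 < r := hx.1.trans_le (hx.2.trans hCr)
  calc _ ≤ 2 * x ^ 2 / r := abs_mul_integral_shadowLen_sub_le hx.1 (hx.2.trans hCr)
    _ ≤ 2 * C ^ 2 / r := by gcongr; exact hx.1.le; exact hx.2

/-- the mean `m_r` of the normalized shadow arc-length, for radii distributed as
a bounded positive law `μ` and uniform position parameter, satisfies
`r · m_r → 2 E[R]/π` as `r → ∞`. -/
theorem shadow_mean_asymptotics (μ : Measure ℝ) [IsProbabilityMeasure μ] (C : ℝ)
    (hsupp : ∀ᵐ x ∂μ, 0 < x ∧ x ≤ C) :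
    Filter.Tendsto
      (fun r : ℝ => r * ∫ x, (∫ u in Set.Ioo (0:ℝ) 1, shadowLen x u r) ∂μ)
      Filter.atTop (nhds (2 * (∫ x, x ∂μ) / Real.pi)) := by
  rw [tendsto_iff_norm_sub_tendsto_zero]
  refine squeeze_zero' (.of_forall fun _ => norm_nonneg _) ?_
    ((tendsto_const_nhds (x := 2 * C ^ 2)).div_atTop tendsto_id)
  filter_upwards [eventually_ge_atTop C] with r hCr
  exact (norm_eq_abs _).trans_le (abs_mul_integral_integral_shadowLen_sub_le μ hsupp hCr)
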